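/- arXiv:1108.6310 — 2 statements merged into one kernel-verified Lean document; each statement's English description precedes it below -/
import Mathlib

section
/- The system U² − 17·W² = 2·Z², U·W = V² has no nontrivial integer solution. -/
/-!
Dividing a solution by `gcd u w`, the coprime parts of `u` and `w` have square product, hence
are `±A²` and `±B²`, which leads to `A⁴ - 17 B⁴ = 2 s²` with `A`, `B` coprime. Every odd prime
`p ∣ s` makes `17 ≡ (A / B)⁴` a square mod `p`, so by quadratic reciprocity `p` is a square
mod 17, and so is `2`. Hence `s ≡ c²` mod 17 with `c ≠ 0` (as `17 ∤ s`), and `A⁴ ≡ 2 c⁴`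
would make `2` a fourth power mod 17.
-/

theorem isSquare_natCast_of_forall_prime_dvd {R : Type*} [CommSemiring R] {n : ℕ}
    (h : ∀ p, p.Prime → p ∣ n → IsSquare (p : R)) : IsSquare (n : R) := by
  induction n using Nat.recOnMul with
  | zero => exact ⟨0, by simp⟩
  | one => exact ⟨1, by simp⟩
  | prime p hp => exact h p hp dvd_rfl
  | mul a b ha hb =>
    rw [Nat.cast_mul]
    exact (ha fun p hp hpa => h p hp (hpa.mul_right b)).mul
      (hb fun p hp hpb => h p hp (hpb.mul_left a))

theorem isSquare_of_pow_four_eq_mul {K : Type*} [Field K] {a b c : K} (hb : b ≠ 0)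
    (h : a ^ 4 = c * b ^ 4) : IsSquare c :=
  ⟨a ^ 2 / b ^ 2, by field_simp; linear_combination -h⟩

theorem exists_eq_two_mul_sq_of_sq_mul_eq_two_mul_sq {g N z : ℤ} (hg : g ≠ 0)
    (h : g ^ 2 * N = 2 * z ^ 2) : ∃ s, N = 2 * s ^ 2 := by
  obtain ⟨t, ht⟩ : g ∣ 2 * z :=
    (Int.pow_dvd_pow_iff two_ne_zero).mp
      (show g ^ 2 ∣ (2 * z) ^ 2 from ⟨2 * N, by linear_combination -2 * h⟩)
  have htN : t ^ 2 = 2 * N := by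
    apply mul_left_cancel₀ (pow_ne_zero 2 hg)
    linear_combination -2 * h - (2 * z + g * t) * ht
  obtain ⟨s, rfl⟩ : 2 ∣ t := Int.prime_two.dvd_of_dvd_pow ⟨N, htN⟩
  exact ⟨s, by linarith⟩

section Quartic

variable {q : ℕ} [Fact q.Prime] {A B Z : ℤ}

theorem not_dvd_of_pow_four_sub_mul_pow_four_eq (hAB : IsCoprime A B)
    (h : A ^ 4 - q * B ^ 4 = 2 * Z ^ 2) : ¬ (q : ℤ) ∣ Z := by
  have hq : Prime (q : ℤ) := Nat.prime_iff_prime_int.mp Fact.out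
  rintro ⟨Z, rfl⟩
  obtain ⟨A, rfl⟩ : (q : ℤ) ∣ A := hq.dvd_of_dvd_pow (n := 4)
    ⟨B ^ 4 + 2 * q * Z ^ 2, by linear_combination h⟩
  have hB : (q : ℤ) ∣ B := hq.dvd_of_dvd_pow (n := 4)
    ⟨q ^ 2 * A ^ 4 - 2 * Z ^ 2, by
      apply mul_left_cancel₀ (Nat.cast_ne_zero.mpr (Fact.out : q.Prime).ne_zero)
      linear_combination -h⟩
  exact hq.not_isUnit (hAB.isUnit_of_dvd' (dvd_mul_right _ _) hB)

theorem isSquare_of_prime_dvd_of_pow_four_sub_mul_pow_four_eq (hq : q % 4 = 1)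
    (hAB : IsCoprime A B) (h : A ^ 4 - q * B ^ 4 = 2 * Z ^ 2)
    {p : ℕ} [Fact p.Prime] (hp : p ≠ 2) (hpZ : (p : ℤ) ∣ Z) : IsSquare (p : ZMod q) := by
  have hpp : Prime (p : ℤ) := Nat.prime_iff_prime_int.mp Fact.out
  have hpB : ¬ (p : ℤ) ∣ B := by
    intro hpB
    have hpA : (p : ℤ) ∣ A := hpp.dvd_of_dvd_pow (n := 4) <| by
      rw [show A ^ 4 = q * B ^ 4 + 2 * Z ^ 2 by linear_combination h]
      exact dvd_add ((dvd_pow hpB four_ne_zero).mul_left _)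
        ((dvd_pow hpZ two_ne_zero).mul_left _)
    exact hpp.not_isUnit (hAB.isUnit_of_dvd' hpA hpB)
  have hB : (B : ZMod p) ≠ 0 := by rwa [Ne, ZMod.intCast_zmod_eq_zero_iff_dvd]
  have hZ : (Z : ZMod p) = 0 := (ZMod.intCast_zmod_eq_zero_iff_dvd Z p).mpr hpZ
  have hmod : (A : ZMod p) ^ 4 = q * (B : ZMod p) ^ 4 := by
    have := congrArg (Int.cast : ℤ → ZMod p) h
    push_cast [hZ] at this
    linear_combination this
  exact (ZMod.exists_sq_eq_prime_iff_of_mod_four_eq_one hq hp).mpr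
    (isSquare_of_pow_four_eq_mul hB hmod)

theorem pow_four_sub_mul_pow_four_ne_two_mul_sq (hq : q % 4 = 1)
    (h2 : IsSquare (2 : ZMod q)) (h4 : ∀ x : ZMod q, x ^ 4 ≠ 2) (hAB : IsCoprime A B) :
    A ^ 4 - q * B ^ 4 ≠ 2 * Z ^ 2 := by
  intro h
  obtain ⟨c, hc⟩ : IsSquare (Z.natAbs : ZMod q) := by
    refine isSquare_natCast_of_forall_prime_dvd fun p hp hpZ => ?_
    rcases eq_or_ne p 2 with rfl | hp2
    · exact_mod_cast h2
    · have : Fact p.Prime := ⟨hp⟩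
      exact isSquare_of_prime_dvd_of_pow_four_sub_mul_pow_four_eq hq hAB h hp2
        (Int.natCast_dvd.mpr hpZ)
  have hc0 : c ≠ 0 := by
    rintro rfl
    apply not_dvd_of_pow_four_sub_mul_pow_four_eq hAB h
    exact Int.natCast_dvd.mpr ((ZMod.natCast_eq_zero_iff _ _).mp (by simpa using hc))
  have hmod : (A : ZMod q) ^ 4 = 2 * c ^ 4 := by
    have := congrArg (Int.cast : ℤ → ZMod q) h
    have hZ : (Z : ZMod q) ^ 2 = c ^ 4 := by
      rw [← Int.cast_pow, ← Int.natAbs_sq, Int.cast_pow, Int.cast_natCast, hc]; ring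
    push_cast [ZMod.natCast_self] at this
    linear_combination this + 2 * hZ
  exact h4 (A / c) (by field_simp; linear_combination hmod)

end Quartic

theorem exists_isCoprime_sq_eq_pow_four_of_mul_eq_sq {u w v : ℤ} (huw : IsCoprime u w)
    (h : u * w = v ^ 2) : ∃ A B : ℤ, IsCoprime A B ∧ u ^ 2 = A ^ 4 ∧ w ^ 2 = B ^ 4 := by
  obtain ⟨A, hA⟩ := Int.sq_of_isCoprime huw h
  obtain ⟨B, hB⟩ := Int.sq_of_isCoprime huw.symm (by rw [mul_comm, h])
  have hAu : A ∣ u := by rcases hA with rfl | rfl <;> simp [sq]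
  have hBw : B ∣ w := by rcases hB with rfl | rfl <;> simp [sq]
  refine ⟨A, B, (huw.of_isCoprime_of_dvd_left hAu).of_isCoprime_of_dvd_right hBw, ?_, ?_⟩
  · rcases hA with rfl | rfl <;> ring
  · rcases hB with rfl | rfl <;> ring

theorem eq_zero_of_sq_sub_mul_sq_eq_two_mul_sq {q : ℕ} [Fact q.Prime] (hq : q % 4 = 1)
    (h2 : IsSquare (2 : ZMod q)) (h4 : ∀ x : ZMod q, x ^ 4 ≠ 2) {u v w z : ℤ}
    (h : u ^ 2 - q * w ^ 2 = 2 * z ^ 2) (huw : u * w = v ^ 2) :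
    u = 0 ∧ v = 0 ∧ w = 0 ∧ z = 0 := by
  rcases (Int.gcd u w).eq_zero_or_pos with hg | hg
  · obtain ⟨rfl, rfl⟩ := Int.gcd_eq_zero_iff.mp hg
    exact ⟨rfl, by simpa using huw.symm, rfl, by simpa using h.symm⟩
  obtain ⟨g, u, w, hgpos, hcop, rfl, rfl⟩ := Int.exists_gcd_one' hg
  have hg0 : (g : ℤ) ≠ 0 := by exact_mod_cast hgpos.ne'
  obtain ⟨v, rfl⟩ : (g : ℤ) ∣ v := (Int.pow_dvd_pow_iff two_ne_zero).mp
    (show (g : ℤ) ^ 2 ∣ v ^ 2 from ⟨u * w, by linear_combination -huw⟩)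
  obtain ⟨A, B, hAB, hA, hB⟩ := exists_isCoprime_sq_eq_pow_four_of_mul_eq_sq
    (Int.isCoprime_iff_gcd_eq_one.mpr hcop)
    (mul_left_cancel₀ (pow_ne_zero 2 hg0) (by linear_combination huw) : u * w = v ^ 2)
  obtain ⟨s, hs⟩ := exists_eq_two_mul_sq_of_sq_mul_eq_two_mul_sq
    (N := A ^ 4 - q * B ^ 4) (z := z) hg0 (by linear_combination h - (g : ℤ) ^ 2 * hA + (g : ℤ) ^ 2 * q * hB)
  exact (pow_four_sub_mul_pow_four_ne_two_mul_sq hq h2 h4 hAB hs).elim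

theorem stmt14 :
    ¬ ∃ u v w z : ℤ, ¬(u = 0 ∧ v = 0 ∧ w = 0 ∧ z = 0) ∧
      u ^ 2 - 17 * w ^ 2 = 2 * z ^ 2 ∧ u * w = v ^ 2 := by
  rintro ⟨u, v, w, z, hne, h, huw⟩
  have h2 : IsSquare (2 : ZMod 17) := by decide
  have h4 : ∀ x : ZMod 17, x ^ 4 ≠ 2 := by decide
  have : Fact (Nat.Prime 17) := ⟨by norm_num⟩
  exact hne (eq_zero_of_sq_sub_mul_sq_eq_two_mul_sq rfl h2 h4 (by exact_mod_cast h) huw)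
end

section
/- For every prime p, the system U² − 17·W² = 2·Z², U·W = V² has a primitive solution modulo p^k for all k ≥ 1. -/
/-!
Each of `X² - 2`, `X² + 8`, `17X² + 2`, `X⁴ - 17`, `X⁴ + 17` turns a root `x` modulo `n` into the
primitive solution `(x, 0, 0, 1)`, `(1, 1, 1, x)`, `(0, 0, x, 1)`, `(x², x, 1, 0)`,
`(x², x, 1, x²)` modulo `n`, so it suffices that one of them has a root in `ℤ_[p]`; Hensel's
lemma provides it. For `p = 2`, `X⁴ - 17` lifts from `3`. For odd `p`, one of them has a simple
root mod `p`: if none of `2`, `-2`, `-34` is a square, then `17` and `-1` are squares but `√-1` is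
not (`c⁴ = -1` forces `(c + c⁻¹)² = 2`), so one of `±17` is a fourth power.
-/

open Polynomial

theorem Polynomial.aeval_intCast_eq_eval {R : Type*} [Ring R] (f : ℤ[X]) (a : ℤ) :
    aeval (a : R) f = ((f.eval a : ℤ) : R) := by
  rw [← eval_map_algebraMap, algebraMap_int_eq, eval_intCast_map, eq_intCast, Int.cast_id]

namespace PadicInt

variable {p : ℕ} [Fact p.Prime]

theorem exists_aeval_eq_zero_of_pow_dvd (f : ℤ[X]) (a : ℤ) (n : ℕ)
    (h : (p : ℤ) ^ (2 * n + 1) ∣ f.eval a) (h' : ¬(p : ℤ) ^ (n + 1) ∣ f.derivative.eval a) :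
    ∃ z : ℤ_[p], aeval z f = 0 := by
  have hval : ‖aeval (a : ℤ_[p]) f‖ ≤ (p : ℝ) ^ (-(2 * n + 1 : ℕ) : ℤ) := by
    rw [aeval_intCast_eq_eval]; exact norm_int_le_pow_iff_dvd.2 h
  have hder : (p : ℝ) ^ (-n : ℤ) ≤ ‖aeval (a : ℤ_[p]) f.derivative‖ := by
    rw [aeval_intCast_eq_eval]
    by_contra hlt
    have hexp : -((n + 1 : ℕ) : ℤ) + 1 = -n := by push_cast; ring
    exact h' <| norm_int_le_pow_iff_dvd.1 <| by
      rw [norm_le_pow_iff_norm_lt_pow_add_one, hexp]; exact not_le.1 hlt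
  obtain ⟨z, hz, -⟩ := hensels_lemma (F := f) (a := (a : ℤ_[p])) <| by
    calc ‖aeval (a : ℤ_[p]) f‖ ≤ (p : ℝ) ^ (-(2 * n + 1 : ℕ) : ℤ) := hval
      _ < ((p : ℝ) ^ (-n : ℤ)) ^ 2 := by
        rw [← zpow_natCast, ← zpow_mul]
        gcongr
        · exact_mod_cast (Fact.out : p.Prime).one_lt
        · push_cast; linarith
      _ ≤ ‖aeval (a : ℤ_[p]) f.derivative‖ ^ 2 := by gcongr
  exact ⟨z, hz⟩

theorem exists_pow_dvd_eval_of_aeval_eq_zero (f : ℤ[X]) {z : ℤ_[p]} (hz : aeval z f = 0)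
    (k : ℕ) : ∃ x : ℤ, (p : ℤ) ^ k ∣ f.eval x := by
  refine ⟨z.appr k, norm_int_le_pow_iff_dvd.1 ?_⟩
  rw [norm_le_pow_iff_mem_span_pow, Ideal.mem_span_singleton, ← aeval_intCast_eq_eval]
  have hsub := sub_dvd_eval_sub ((z.appr k : ℤ) : ℤ_[p]) z (f.map (algebraMap ℤ ℤ_[p]))
  rw [eval_map_algebraMap, eval_map_algebraMap, hz, sub_zero] at hsub
  have happr := appr_spec k z
  rw [Ideal.mem_span_singleton, ← dvd_neg, neg_sub] at happr
  simpa using happr.trans hsub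

end PadicInt

theorem FiniteField.isSquare_mul_of_not_isSquare {F : Type*} [Field F] [Fintype F]
    {a b : F} (ha : ¬IsSquare a) (hb : ¬IsSquare b) : IsSquare (a * b) := by
  classical
  have hab : a * b ≠ 0 := mul_ne_zero (fun h ↦ ha (h ▸ .zero)) (fun h ↦ hb (h ▸ .zero))
  rw [← quadraticChar_one_iff_isSquare hab, map_mul,
    quadraticChar_neg_one_iff_not_isSquare.2 ha, quadraticChar_neg_one_iff_not_isSquare.2 hb]
  norm_num

theorem isSquare_two_of_pow_four_eq_neg_one {F : Type*} [Field F] {c : F} (hc : c ^ 4 = -1) :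
    IsSquare (2 : F) := by
  have hc0 : c ≠ 0 := by rintro rfl; norm_num at hc
  refine ⟨c + c⁻¹, ?_⟩
  field_simp
  linear_combination -hc

theorem ZMod.exists_parametrizing_root (p : ℕ) [Fact p.Prime] :
    (∃ s : ZMod p, s ^ 2 = 2) ∨ (∃ s : ZMod p, s ^ 2 = -8) ∨ (∃ s : ZMod p, 17 * s ^ 2 = -2) ∨
      (∃ s : ZMod p, s ^ 4 = 17 ∧ s ≠ 0) ∨ (∃ s : ZMod p, s ^ 4 = -17 ∧ s ≠ 0) := by
  by_cases h2 : IsSquare (2 : ZMod p)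
  · obtain ⟨s, hs⟩ := h2
    exact .inl ⟨s, by rw [hs, sq]⟩
  by_cases hm2 : IsSquare (-2 : ZMod p)
  · obtain ⟨s, hs⟩ := hm2
    exact .inr <| .inl ⟨2 * s, by linear_combination -4 * hs⟩
  have h17 : (17 : ZMod p) ≠ 0 := fun h ↦ h2 ⟨6, by linear_combination -2 * h⟩
  by_cases h17sq : IsSquare (17 : ZMod p)
  · obtain ⟨t, ht⟩ := h17sq
    have hm1 : IsSquare (-1 : ZMod p) := by
      by_contra hm1
      exact hm2 (by simpa using FiniteField.isSquare_mul_of_not_isSquare hm1 h2)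
    obtain ⟨i, hi⟩ := hm1
    have hi' : ¬IsSquare i := fun ⟨c, hc⟩ ↦
      h2 (isSquare_two_of_pow_four_eq_neg_one (by rw [hi, hc]; ring))
    by_cases ht' : IsSquare t
    · obtain ⟨s, hs⟩ := ht'
      refine .inr <| .inr <| .inr <| .inl ⟨s, by rw [ht, hs]; ring, ?_⟩
      rintro rfl
      exact h17 (by rw [ht, hs]; ring)
    · obtain ⟨s, hs⟩ := FiniteField.isSquare_mul_of_not_isSquare hi' ht'
      have hs4 : s ^ 4 = -17 := by
        linear_combination -(s * s + i * t) * hs - t ^ 2 * hi + ht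
      refine .inr <| .inr <| .inr <| .inr ⟨s, hs4, ?_⟩
      rintro rfl
      exact h17 (by linear_combination hs4)
  · obtain ⟨r, hr⟩ := FiniteField.isSquare_mul_of_not_isSquare hm2 h17sq
    refine .inr <| .inr <| .inl ⟨r / 17, ?_⟩
    field_simp
    linear_combination -hr

def HasPrimitiveSolMod (n : ℤ) : Prop :=
  ∃ u v w z : ℤ, Int.gcd u (Int.gcd v (Int.gcd w z)) = 1 ∧
    u ^ 2 - 17 * w ^ 2 ≡ 2 * z ^ 2 [ZMOD n] ∧ u * w ≡ v ^ 2 [ZMOD n]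

def YieldsPrimitiveSol (f : ℤ[X]) : Prop :=
  ∀ n x : ℤ, n ∣ f.eval x → HasPrimitiveSolMod n

theorem yieldsPrimitiveSol_X_sq_sub_two : YieldsPrimitiveSol (X ^ 2 - 2) := by
  rintro n x ⟨c, hc⟩
  simp only [eval_sub, eval_pow, eval_X, eval_ofNat] at hc
  exact ⟨x, 0, 0, 1, by simp, Int.modEq_of_dvd ⟨-c, by linear_combination -hc⟩,
    Int.modEq_of_dvd ⟨0, by ring⟩⟩

theorem yieldsPrimitiveSol_X_sq_add_eight : YieldsPrimitiveSol (X ^ 2 + 8) := by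
  rintro n x ⟨c, hc⟩
  simp only [eval_add, eval_pow, eval_X, eval_ofNat] at hc
  exact ⟨1, 1, 1, x, by simp, Int.modEq_of_dvd ⟨2 * c, by linear_combination 2 * hc⟩,
    Int.modEq_of_dvd ⟨0, by ring⟩⟩

theorem yieldsPrimitiveSol_seventeen_mul_X_sq_add_two : YieldsPrimitiveSol (17 * X ^ 2 + 2) := by
  rintro n x ⟨c, hc⟩
  simp only [eval_add, eval_mul, eval_pow, eval_X, eval_ofNat] at hc
  exact ⟨0, 0, x, 1, by simp, Int.modEq_of_dvd ⟨c, by linear_combination hc⟩,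
    Int.modEq_of_dvd ⟨0, by ring⟩⟩

theorem yieldsPrimitiveSol_X_pow_four_sub_seventeen : YieldsPrimitiveSol (X ^ 4 - 17) := by
  rintro n x ⟨c, hc⟩
  simp only [eval_sub, eval_pow, eval_X, eval_ofNat] at hc
  exact ⟨x ^ 2, x, 1, 0, by simp, Int.modEq_of_dvd ⟨-c, by linear_combination -hc⟩,
    Int.modEq_of_dvd ⟨0, by ring⟩⟩

theorem yieldsPrimitiveSol_X_pow_four_add_seventeen : YieldsPrimitiveSol (X ^ 4 + 17) := by
  rintro n x ⟨c, hc⟩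
  simp only [eval_add, eval_pow, eval_X, eval_ofNat] at hc
  exact ⟨x ^ 2, x, 1, x ^ 2, by simp, Int.modEq_of_dvd ⟨c, by linear_combination hc⟩,
    Int.modEq_of_dvd ⟨0, by ring⟩⟩

namespace YieldsPrimitiveSol

variable {p : ℕ} [Fact p.Prime] {f : ℤ[X]}

theorem hasPrimitiveSolMod_pow (hf : YieldsPrimitiveSol f) (a : ℤ) (n : ℕ)
    (h : (p : ℤ) ^ (2 * n + 1) ∣ f.eval a) (h' : ¬(p : ℤ) ^ (n + 1) ∣ f.derivative.eval a)
    (k : ℕ) : HasPrimitiveSolMod ((p : ℤ) ^ k) := by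
  obtain ⟨z, hz⟩ := PadicInt.exists_aeval_eq_zero_of_pow_dvd f a n h h'
  obtain ⟨x, hx⟩ := PadicInt.exists_pow_dvd_eval_of_aeval_eq_zero f hz k
  exact hf _ x hx

theorem hasPrimitiveSolMod_pow_of_aeval_eq_zero (hf : YieldsPrimitiveSol f) (s : ZMod p)
    (hs : aeval s f = 0) (hs' : aeval s f.derivative ≠ 0) (k : ℕ) :
    HasPrimitiveSolMod ((p : ℤ) ^ k) := by
  obtain ⟨a, rfl⟩ := ZMod.intCast_surjective s
  rw [aeval_intCast_eq_eval, ZMod.intCast_zmod_eq_zero_iff_dvd] at hs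
  rw [ne_eq, aeval_intCast_eq_eval, ZMod.intCast_zmod_eq_zero_iff_dvd] at hs'
  exact hf.hasPrimitiveSolMod_pow a 0 (by simpa using hs) (by simpa using hs') k

end YieldsPrimitiveSol

theorem hasPrimitiveSolMod_two_pow (k : ℕ) : HasPrimitiveSolMod (2 ^ k) := by
  have : Fact (Nat.Prime 2) := ⟨Nat.prime_two⟩
  exact_mod_cast yieldsPrimitiveSol_X_pow_four_sub_seventeen.hasPrimitiveSolMod_pow (p := 2) 3 2
    (by norm_num) (by norm_num) k

theorem hasPrimitiveSolMod_pow_of_ne_two {p : ℕ} [Fact p.Prime] (hp2 : p ≠ 2) (k : ℕ) :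
    HasPrimitiveSolMod ((p : ℤ) ^ k) := by
  have h2 : (2 : ZMod p) ≠ 0 := Ring.two_ne_zero (by rwa [ZMod.ringChar_zmod_n])
  have h4 : (4 : ZMod p) ≠ 0 := by
    rw [show (4 : ZMod p) = 2 ^ 2 by norm_num]; exact pow_ne_zero 2 h2
  rcases ZMod.exists_parametrizing_root p with ⟨s, hs⟩ | ⟨s, hs⟩ | ⟨s, hs⟩ | ⟨s, hs, hs0⟩ |
      ⟨s, hs, hs0⟩
  · have hs0 : s ≠ 0 := by rintro rfl; exact h2 (by simpa using hs.symm)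
    exact yieldsPrimitiveSol_X_sq_sub_two.hasPrimitiveSolMod_pow_of_aeval_eq_zero s
      (by simp [map_ofNat, hs]) (by simp [map_ofNat, h2, hs0]) k
  · have hs0 : s ≠ 0 := by
      rintro rfl
      exact h2 (pow_eq_zero_iff three_ne_zero |>.1 (by linear_combination hs))
    exact yieldsPrimitiveSol_X_sq_add_eight.hasPrimitiveSolMod_pow_of_aeval_eq_zero s
      (by simp [map_ofNat, hs]) (by simp [map_ofNat, h2, hs0]) k
  · have hs0 : (17 : ZMod p) * s ≠ 0 := by rintro h; exact h2 (by linear_combination hs - s * h)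
    exact yieldsPrimitiveSol_seventeen_mul_X_sq_add_two.hasPrimitiveSolMod_pow_of_aeval_eq_zero s
      (by simp [map_ofNat, hs]) (by simpa [map_ofNat, h2] using hs0) k
  · exact yieldsPrimitiveSol_X_pow_four_sub_seventeen.hasPrimitiveSolMod_pow_of_aeval_eq_zero s
      (by simp [map_ofNat, hs]) (by simp [map_ofNat, h4, hs0]) k
  · exact yieldsPrimitiveSol_X_pow_four_add_seventeen.hasPrimitiveSolMod_pow_of_aeval_eq_zero s
      (by simp [map_ofNat, hs]) (by simp [map_ofNat, h4, hs0]) k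

theorem stmt16 (p : ℕ) (hp : p.Prime) :
    ∀ k : ℕ, 1 ≤ k → ∃ u v w z : ℤ,
      Int.gcd u (Int.gcd v (Int.gcd w z)) = 1 ∧
      u ^ 2 - 17 * w ^ 2 ≡ 2 * z ^ 2 [ZMOD ((p : ℤ) ^ k)] ∧
      u * w ≡ v ^ 2 [ZMOD ((p : ℤ) ^ k)] := by
  intro k _
  have : Fact p.Prime := ⟨hp⟩
  rcases eq_or_ne p 2 with rfl | hp2
  · exact_mod_cast hasPrimitiveSolMod_two_pow k
  · exact hasPrimitiveSolMod_pow_of_ne_two hp2 k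
end
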